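/- arXiv:1705.03071 — 4 statements merged into one kernel-verified Lean document; each statement's English description precedes it below -/
import Mathlib

section
/- For a two-layer network with all rows of W nonzero and all columns of V nonzero, there exists a positive diagonal D such that for W' = DW, V' = VD⁻¹, every hidden unit k satisfies (Σ_i |W'_{k,i}|^p)^{1/p} = (Σ_j |V'_{j,k}|^p)^{1/p}, i.e., the network can be rebalanced so that each hidden unit's incoming and outgoing ℓ_p norms are equal. -/
/-- A two-layer ReLU network with nonzero rows of `W` and nonzero columns of `V` can be
rebalanced by a positive diagonal rescaling `D` so that, with `W' = D·W` and `V' = V·D⁻¹`,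
every hidden unit's incoming and outgoing ℓ_p norms are equal. -/
theorem exists_balancing_rescaling
    (H D C : ℕ) (W : Matrix (Fin H) (Fin D) ℝ) (V : Matrix (Fin C) (Fin H) ℝ)
    (p : ℝ) (hp : 1 ≤ p)
    (hW : ∀ k, ∃ i, W k i ≠ 0) (hV : ∀ k, ∃ j, V j k ≠ 0) :
    ∃ c : Fin H → ℝ, (∀ k, 0 < c k) ∧
      ∀ k : Fin H,
        (∑ i : Fin D, |c k * W k i| ^ p) ^ (1 / p)
          = (∑ j : Fin C, |V j k / c k| ^ p) ^ (1 / p) := by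
  have hp0 : p ≠ 0 := by linarith
  set SW : Fin H → ℝ := fun k => ∑ i : Fin D, |W k i| ^ p with hSW
  set SV : Fin H → ℝ := fun k => ∑ j : Fin C, |V j k| ^ p with hSV
  have hSWpos : ∀ k, 0 < SW k := by
    intro k
    obtain ⟨i, hi⟩ := hW k
    refine Finset.sum_pos' (fun i _ => Real.rpow_nonneg (abs_nonneg _) _) ⟨i, Finset.mem_univ i, ?_⟩
    exact Real.rpow_pos_of_pos (abs_pos.mpr hi) _
  have hSVpos : ∀ k, 0 < SV k := by
    intro k
    obtain ⟨j, hj⟩ := hV k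
    refine Finset.sum_pos' (fun j _ => Real.rpow_nonneg (abs_nonneg _) _) ⟨j, Finset.mem_univ j, ?_⟩
    exact Real.rpow_pos_of_pos (abs_pos.mpr hj) _
  set A : Fin H → ℝ := fun k => (SW k) ^ (1 / p) with hA
  set B : Fin H → ℝ := fun k => (SV k) ^ (1 / p) with hB
  have hApos : ∀ k, 0 < A k := fun k => Real.rpow_pos_of_pos (hSWpos k) _
  have hBpos : ∀ k, 0 < B k := fun k => Real.rpow_pos_of_pos (hSVpos k) _
  refine ⟨fun k => Real.sqrt (B k / A k), fun k => Real.sqrt_pos.mpr (div_pos (hBpos k) (hApos k)), ?_⟩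
  intro k
  set c : ℝ := Real.sqrt (B k / A k) with hc
  have hcpos : 0 < c := Real.sqrt_pos.mpr (div_pos (hBpos k) (hApos k))
  have hL : (∑ i : Fin D, |c * W k i| ^ p) ^ (1 / p) = c * A k := by
    have : ∀ i : Fin D, |c * W k i| ^ p = c ^ p * |W k i| ^ p := by
      intro i
      rw [abs_mul, abs_of_pos hcpos, Real.mul_rpow hcpos.le (abs_nonneg _)]
    rw [Finset.sum_congr rfl (fun i _ => this i), ← Finset.mul_sum,
      Real.mul_rpow (Real.rpow_nonneg hcpos.le _) (Finset.sum_nonneg fun i _ => Real.rpow_nonneg (abs_nonneg _) _),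
      ← Real.rpow_mul hcpos.le, mul_one_div_cancel hp0, Real.rpow_one]
  have hR : (∑ j : Fin C, |V j k / c| ^ p) ^ (1 / p) = B k / c := by
    have : ∀ j : Fin C, |V j k / c| ^ p = |V j k| ^ p / c ^ p := by
      intro j
      rw [abs_div, abs_of_pos hcpos, Real.div_rpow (abs_nonneg _) hcpos.le]
    rw [Finset.sum_congr rfl (fun j _ => this j), ← Finset.sum_div,
      Real.div_rpow (Finset.sum_nonneg fun j _ => Real.rpow_nonneg (abs_nonneg _) _) (Real.rpow_nonneg hcpos.le _),
      hB, ← Real.rpow_mul hcpos.le, mul_one_div_cancel hp0, Real.rpow_one]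
  rw [hL, hR]
  have hc2 : c ^ 2 = B k / A k := Real.sq_sqrt (div_pos (hBpos k) (hApos k)).le
  rw [eq_div_iff hcpos.ne']
  have h2 : c * A k * c = c ^ 2 * A k := by ring
  rw [h2, hc2, div_mul_cancel₀ _ (hApos k).ne']
end

section
/- Plain gradient descent is not rescaling invariant: there exist a differentiable rescaling-invariant loss L on two-layer weights, rescaling-equivalent initial weights w ~ w̃, and a step size η > 0 such that the results of one gradient descent step from w and from w̃ are not rescaling equivalent. -/
/-- Rescaling equivalence for a one-hidden-unit two-layer network with scalar weights. -/
def ScalarRescalEquiv (a b : ℝ × ℝ) : Prop :=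
  ∃ c : ℝ, 0 < c ∧ b.1 = c * a.1 ∧ b.2 = a.2 / c

/-- One gradient-descent step with step size `η` for a loss on `ℝ × ℝ`. -/
noncomputable def gdStep (L : ℝ × ℝ → ℝ) (η : ℝ) (w : ℝ × ℝ) : ℝ × ℝ :=
  (w.1 - η * deriv (fun t => L (t, w.2)) w.1,
   w.2 - η * deriv (fun t => L (w.1, t)) w.2)

set_option linter.unnecessarySimpa false in
lemma deriv_left (a b : ℝ) : deriv (fun t : ℝ => (t * b - 1) ^ 2) a = 2 * (a * b - 1) * b := by
  have h := ((((hasDerivAt_id a).mul_const b).sub_const 1).pow 2).deriv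
  simpa using h

lemma deriv_right (a b : ℝ) : deriv (fun t : ℝ => (a * t - 1) ^ 2) b = 2 * (a * b - 1) * a := by
  have h := ((((hasDerivAt_id b).const_mul a).sub_const 1).pow 2).deriv
  simpa [mul_comm, Pi.pow_def] using h

/-- Plain gradient descent is not rescaling invariant: there exist a differentiable
rescaling-invariant loss `L`, rescaling-equivalent initial weights `w ~ w̃` and a step
size `η > 0` such that the results of one gradient step from `w` and from `w̃` are not
rescaling equivalent. -/
theorem gradient_descent_not_rescaling_invariant :
    ∃ L : ℝ × ℝ → ℝ, Differentiable ℝ L ∧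
      (∀ c : ℝ, 0 < c → ∀ w : ℝ × ℝ, L (c * w.1, w.2 / c) = L w) ∧
      ∃ (w w' : ℝ × ℝ) (η : ℝ), 0 < η ∧ ScalarRescalEquiv w w' ∧
        ¬ ScalarRescalEquiv (gdStep L η w) (gdStep L η w') := by
  refine ⟨fun w => (w.1 * w.2 - 1) ^ 2, ?_, ?_, (1, 4), (2, 2), 1, one_pos, ?_, ?_⟩
  · exact (((differentiable_fst.mul differentiable_snd).sub_const 1).pow 2)
  · intro c hc w
    have hc' : c ≠ 0 := ne_of_gt hc
    field_simp
  · exact ⟨2, by norm_num, by norm_num, by norm_num⟩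
  · have h1 : gdStep (fun w => (w.1 * w.2 - 1) ^ 2) 1 (1, 4) = (-23, -2) := by
      simp [gdStep, deriv_left, deriv_right]; norm_num
    have h2 : gdStep (fun w => (w.1 * w.2 - 1) ^ 2) 1 (2, 2) = (-10, -10) := by
      simp [gdStep, deriv_left, deriv_right]; norm_num
    rw [h1, h2]
    rintro ⟨c, hc, h₁, h₂⟩
    simp only at h₁ h₂
    have : c = 10 / 23 := by linarith
    rw [this] at h₂
    norm_num at h₂
end

section
/- Under the hypothesis that |w'_e − w_e| ≤ δ|w_e| for all edges e with δ ≤ 1/d, the ℓ_p norm of the change in the path vector satisfies ‖π(w') − π(w)‖_p ≤ ((1+δ)^d − 1)·φ_p(w) ≤ (e−1)·d·δ·φ_p(w), where π(w) is the vector of products of weights along all input-output paths of length d and φ_p(w) = ‖π(w)‖_p. -/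
open Finset

lemma prod_pert_aux {ι : Type*} [DecidableEq ι] (s : Finset ι) (a b : ι → ℝ) (δ : ℝ) (hδ0 : 0 ≤ δ)
    (h : ∀ i, |a i - b i| ≤ δ * |b i|) :
    |∏ i ∈ s, a i - ∏ i ∈ s, b i| ≤ ((1 + δ) ^ s.card - 1) * ∏ i ∈ s, |b i| := by
  induction s using Finset.induction with
  | empty => simp
  | @insert j s hj ih =>
    rw [Finset.prod_insert hj, Finset.prod_insert hj, Finset.prod_insert hj,
      Finset.card_insert_of_notMem hj]
    have haj : |a j| ≤ (1 + δ) * |b j| := by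
      have := h j
      have := abs_sub_abs_le_abs_sub (a j) (b j)
      nlinarith [abs_nonneg (b j)]
    have key : a j * ∏ i ∈ s, a i - b j * ∏ i ∈ s, b i
        = a j * (∏ i ∈ s, a i - ∏ i ∈ s, b i) + (a j - b j) * ∏ i ∈ s, b i := by ring
    rw [key]
    have h1 : |a j * (∏ i ∈ s, a i - ∏ i ∈ s, b i)|
        ≤ (1 + δ) * |b j| * (((1 + δ) ^ s.card - 1) * ∏ i ∈ s, |b i|) := by
      rw [abs_mul]
      exact mul_le_mul haj ih (abs_nonneg _) (by positivity)
    have h2 : |(a j - b j) * ∏ i ∈ s, b i| ≤ δ * |b j| * ∏ i ∈ s, |b i| := by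
      rw [abs_mul, abs_prod]
      exact mul_le_mul_of_nonneg_right (h j) (by positivity)
    have hpow : (1:ℝ) ≤ (1 + δ) ^ s.card := one_le_pow₀ (by linarith)
    calc |a j * (∏ i ∈ s, a i - ∏ i ∈ s, b i) + (a j - b j) * ∏ i ∈ s, b i|
        ≤ |a j * (∏ i ∈ s, a i - ∏ i ∈ s, b i)| + |(a j - b j) * ∏ i ∈ s, b i| :=
          abs_add_le _ _
      _ ≤ (1 + δ) * |b j| * (((1 + δ) ^ s.card - 1) * ∏ i ∈ s, |b i|)
            + δ * |b j| * ∏ i ∈ s, |b i| := add_le_add h1 h2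
      _ = ((1 + δ) ^ (s.card + 1) - 1) * (|b j| * ∏ i ∈ s, |b i|) := by ring
      _ ≤ _ := le_refl _

lemma coeff_bound (d : ℕ) (hd : 0 < d) (δ : ℝ) (hδ0 : 0 ≤ δ) (hδ : δ ≤ 1 / (d : ℝ)) :
    (1 + δ) ^ d - 1 ≤ (Real.exp 1 - 1) * d * δ := by
  have hd' : (0:ℝ) < d := Nat.cast_pos.mpr hd
  have step1 : (1 + δ) ^ d - 1 ≤ (d : ℝ) * δ * ((1 + 1 / d) ^ d - 1) := by
    have e1 : (1 + δ) ^ d = ∑ k ∈ range (d + 1), δ ^ k * (d.choose k : ℝ) := by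
      rw [add_comm, add_pow]; simp
    have e2 : (1 + 1 / (d:ℝ)) ^ d = ∑ k ∈ range (d + 1), (1/(d:ℝ)) ^ k * (d.choose k : ℝ) := by
      rw [add_comm, add_pow]; simp
    have eA : (1 + δ) ^ d = (∑ k ∈ range d, δ ^ (k+1) * (d.choose (k+1) : ℝ)) + 1 := by
      rw [e1, Finset.sum_range_succ']; simp
    have eB : (1 + 1/(d:ℝ)) ^ d
        = (∑ k ∈ range d, (1/(d:ℝ)) ^ (k+1) * (d.choose (k+1) : ℝ)) + 1 := by
      rw [e2, Finset.sum_range_succ']; simp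
    have key : (∑ k ∈ range d, δ ^ (k+1) * (d.choose (k+1) : ℝ))
        ≤ (d:ℝ) * δ * ∑ k ∈ range d, (1/(d:ℝ)) ^ (k+1) * (d.choose (k+1) : ℝ) := by
      rw [Finset.mul_sum]
      apply Finset.sum_le_sum
      intro k _
      have hk : δ ^ k ≤ (1/(d:ℝ)) ^ k := pow_le_pow_left₀ hδ0 hδ k
      have : (d:ℝ) * δ * ((1/(d:ℝ)) ^ (k+1) * (d.choose (k+1) : ℝ))
          = δ * (1/(d:ℝ)) ^ k * (d.choose (k+1) : ℝ) := by
        have hx : (d:ℝ) * (1/(d:ℝ)) = 1 := mul_one_div_cancel hd'.ne'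
        rw [pow_succ]; linear_combination δ * (1/(d:ℝ))^k * (d.choose (k+1):ℝ) * hx
      rw [this, pow_succ']
      apply mul_le_mul_of_nonneg_right _ (by positivity)
      exact mul_le_mul_of_nonneg_left hk hδ0
    calc (1 + δ) ^ d - 1 = ∑ k ∈ range d, δ ^ (k+1) * (d.choose (k+1) : ℝ) := by
          rw [eA]; ring
      _ ≤ (d:ℝ) * δ * ∑ k ∈ range d, (1/(d:ℝ)) ^ (k+1) * (d.choose (k+1) : ℝ) := key
      _ = (d:ℝ) * δ * ((1 + 1/(d:ℝ)) ^ d - 1) := by rw [eB]; ring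
  have step2 : (1 + 1 / (d:ℝ)) ^ d ≤ Real.exp 1 := by
    have h1 : (1 + 1 / (d:ℝ)) ≤ Real.exp (1 / d) := by
      have := Real.add_one_le_exp (1 / (d:ℝ)); linarith
    calc (1 + 1 / (d:ℝ)) ^ d ≤ (Real.exp (1/d)) ^ d :=
          pow_le_pow_left₀ (by positivity) h1 d
      _ = Real.exp ((d:ℝ) * (1/d)) := (Real.exp_nat_mul _ d).symm
      _ = Real.exp 1 := by rw [mul_one_div_cancel (ne_of_gt hd')]
  calc (1 + δ) ^ d - 1 ≤ (d : ℝ) * δ * ((1 + 1 / d) ^ d - 1) := step1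
    _ ≤ (d : ℝ) * δ * (Real.exp 1 - 1) := by
        apply mul_le_mul_of_nonneg_left (by linarith) (by positivity)
    _ = (Real.exp 1 - 1) * d * δ := by ring

/-- If every weight changes by relative amount at most `δ ≤ 1/d`, then the ℓ_p norm of
the change of the path vector `π(w)` (one coordinate per input-output path, equal to the
product of the `d` weights on the path) satisfies
`‖π(w') − π(w)‖_p ≤ ((1+δ)^d − 1)·φ_p(w) ≤ (e−1)·d·δ·φ_p(w)`. -/
theorem path_vector_perturbation
    {E : Type*} {P : Type*} [Fintype P]
    (d : ℕ) (hd : 0 < d) (path : P → Fin d → E)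
    (w w' : E → ℝ) (δ : ℝ) (hδ0 : 0 ≤ δ) (hδ : δ ≤ 1 / (d : ℝ))
    (h : ∀ a : E, |w' a - w a| ≤ δ * |w a|)
    (p : ℝ) (hp : 1 ≤ p) :
    (∑ q : P, |∏ k : Fin d, w' (path q k) - ∏ k : Fin d, w (path q k)| ^ p) ^ (1 / p)
        ≤ ((1 + δ) ^ d - 1) *
          (∑ q : P, |∏ k : Fin d, w (path q k)| ^ p) ^ (1 / p)
    ∧ ((1 + δ) ^ d - 1) *
          (∑ q : P, |∏ k : Fin d, w (path q k)| ^ p) ^ (1 / p)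
        ≤ (Real.exp 1 - 1) * d * δ *
          (∑ q : P, |∏ k : Fin d, w (path q k)| ^ p) ^ (1 / p) := by
  set C : ℝ := (1 + δ) ^ d - 1 with hC
  have hC0 : 0 ≤ C := by
    have : (1:ℝ) ≤ (1 + δ) ^ d := one_le_pow₀ (by linarith)
    simp [hC]; linarith
  have hp0 : 0 < p := lt_of_lt_of_le one_pos hp
  have hS0 : 0 ≤ ∑ q : P, |∏ k : Fin d, w (path q k)| ^ p :=
    Finset.sum_nonneg fun q _ => Real.rpow_nonneg (abs_nonneg _) p
  constructor
  · have pointwise : ∀ q : P,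
        |∏ k : Fin d, w' (path q k) - ∏ k : Fin d, w (path q k)|
          ≤ C * |∏ k : Fin d, w (path q k)| := by
      intro q
      have := prod_pert_aux (Finset.univ : Finset (Fin d))
        (fun k => w' (path q k)) (fun k => w (path q k)) δ hδ0 (fun i => h _)
      simpa [hC, abs_prod] using this
    have sum_le : (∑ q : P, |∏ k : Fin d, w' (path q k) - ∏ k : Fin d, w (path q k)| ^ p)
        ≤ C ^ p * ∑ q : P, |∏ k : Fin d, w (path q k)| ^ p := by
      rw [Finset.mul_sum]
      apply Finset.sum_le_sum
      intro q _
      rw [← Real.mul_rpow hC0 (abs_nonneg _)]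
      exact Real.rpow_le_rpow (abs_nonneg _) (pointwise q) (le_of_lt hp0)
    calc (∑ q : P, |∏ k : Fin d, w' (path q k) - ∏ k : Fin d, w (path q k)| ^ p) ^ (1/p)
        ≤ (C ^ p * ∑ q : P, |∏ k : Fin d, w (path q k)| ^ p) ^ (1/p) :=
          Real.rpow_le_rpow (Finset.sum_nonneg fun q _ => Real.rpow_nonneg (abs_nonneg _) p)
            sum_le (by positivity)
      _ = C * (∑ q : P, |∏ k : Fin d, w (path q k)| ^ p) ^ (1/p) := by
          rw [Real.mul_rpow (Real.rpow_nonneg hC0 p) hS0, ← Real.rpow_mul hC0,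
            mul_one_div_cancel (ne_of_gt hp0), Real.rpow_one]
  · apply mul_le_mul_of_nonneg_right _ (Real.rpow_nonneg hS0 _)
    exact coeff_bound d hd δ hδ0 hδ
end

section
/- The truncated soft-max loss deviation bound: with f(x) = exp(x) for x ≥ −11 and f(x) = exp(−11)·(max(x+13,0))²/4 for x < −11, for all real x one has |exp(x) − f(x)| ≤ 0.000003; consequently for scores s ∈ ℝ^k and label c, |ln Σ_i exp(s_i − s_c) − ln Σ_i f(s_i − s_c)| ≤ 0.000003·k (using that both sums are at least 1 since the term i = c contributes f(0) = exp(0) = 1). -/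
open Real Finset

/-- The truncation `f` of the exponential used in the truncated soft-max loss:
`f(x) = exp x` for `x ≥ −11` and `f(x) = exp(−11)·(max(x+13,0))²/4` otherwise. -/
noncomputable def truncExp (x : ℝ) : ℝ :=
  if -11 ≤ x then Real.exp x else Real.exp (-11) * (max (x + 13) 0) ^ 2 / 4

lemma exp_eleven_lb : (58334 : ℝ) ≤ Real.exp 11 := by
  have h : Real.exp 11 = (Real.exp 1) ^ (11 : ℕ) := by
    rw [← Real.exp_nat_mul]; norm_num
  rw [h]
  calc (58334 : ℝ) ≤ 2.7182818283 ^ (11 : ℕ) := by norm_num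
    _ ≤ (Real.exp 1) ^ (11 : ℕ) :=
        pow_le_pow_left₀ (by norm_num) Real.exp_one_gt_d9.le 11

lemma exp_thirteen_lb : (333334 : ℝ) ≤ Real.exp 13 := by
  have h : Real.exp 13 = (Real.exp 1) ^ (13 : ℕ) := by
    rw [← Real.exp_nat_mul]; norm_num
  rw [h]
  calc (333334 : ℝ) ≤ 2.7182818283 ^ (13 : ℕ) := by norm_num
    _ ≤ (Real.exp 1) ^ (13 : ℕ) :=
        pow_le_pow_left₀ (by norm_num) Real.exp_one_gt_d9.le 13

lemma quartic_le_exp (y : ℝ) (hy : 0 ≤ y) :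
    1 + y + y^2/2 + y^3/6 + y^4/24 ≤ Real.exp y := by
  have h := Real.sum_le_exp_of_nonneg hy 5
  simp [Finset.sum_range_succ, Nat.factorial] at h
  linarith

lemma truncExp_nonneg (x : ℝ) : 0 ≤ truncExp x := by
  unfold truncExp; split
  · exact (Real.exp_pos x).le
  · positivity

lemma truncExp_zero : truncExp 0 = 1 := by
  unfold truncExp; rw [if_pos (by norm_num)]; exact Real.exp_zero

lemma pointwise_bound (x : ℝ) : |Real.exp x - truncExp x| ≤ 3 / 1000000 := by
  unfold truncExp
  split
  · simp; norm_num
  · rename_i hx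
    push_neg at hx
    have h11 := exp_eleven_lb
    have h11pos : (0:ℝ) < Real.exp 11 := Real.exp_pos _
    have hneg11 : Real.exp (-11) = (Real.exp 11)⁻¹ := Real.exp_neg 11
    by_cases h13 : x + 13 ≤ 0
    · rw [max_eq_right h13]
      have hexp : Real.exp x ≤ Real.exp (-13) := Real.exp_le_exp.mpr (by linarith)
      have h13lb := exp_thirteen_lb
      have h13pos : (0:ℝ) < Real.exp 13 := Real.exp_pos _
      have hsmall : Real.exp (-13) ≤ 3 / 1000000 := by
        rw [Real.exp_neg]
        have h1 : (Real.exp 13)⁻¹ ≤ (333334:ℝ)⁻¹ :=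
          inv_anti₀ (by norm_num) h13lb
        have h2 : ((333334:ℝ))⁻¹ ≤ 3 / 1000000 := by norm_num
        linarith
      rw [abs_le]
      constructor
      · nlinarith [Real.exp_pos x]
      · nlinarith [Real.exp_pos x]
    · push_neg at h13
      rw [max_eq_left h13.le]
      -- middle range: -13 < x < -11
      set y : ℝ := -(x + 11) with hy
      have hy0 : 0 ≤ y := by simp only [hy]; linarith
      have hy2 : y ≤ 2 := by simp only [hy]; linarith
      have hsplit : Real.exp x = Real.exp (-11) * Real.exp (x + 11) := by
        rw [← Real.exp_add]; ring_nf
      have hx11 : Real.exp (x + 11) = (Real.exp y)⁻¹ := by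
        rw [hy, ← Real.exp_neg]; ring_nf
      -- upper bound on exp (x+11)
      have hp : 1 + y + y^2/2 + y^3/6 + y^4/24 ≤ Real.exp y := quartic_le_exp y hy0
      have hppos : (0:ℝ) < 1 + y + y^2/2 + y^3/6 + y^4/24 := by nlinarith
      have hkey : 1 ≤ (1 + y + y^2/2 + y^3/6 + y^4/24) * ((2-y)^2/4 + 0.175) := by
        nlinarith [sq_nonneg (y-1.6), sq_nonneg (y-1), sq_nonneg y, sq_nonneg (y-2),
          mul_nonneg hy0 (sub_nonneg.mpr hy2), sq_nonneg (y*(y-2)),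
          sq_nonneg ((y-1.6)*(y-2)), sq_nonneg ((y-1.6)*y)]
      have h24 : (2 - y) = x + 13 := by rw [hy]; ring
      have hub : Real.exp (x + 11) ≤ (x+13)^2/4 + 0.175 := by
        rw [hx11]
        have hApos : (0:ℝ) < (x+13)^2/4 + 0.175 := by positivity
        have h1 : (1:ℝ) / (1 + y + y^2/2 + y^3/6 + y^4/24) ≤ (x+13)^2/4 + 0.175 := by
          rw [div_le_iff₀ hppos]
          nlinarith [hkey]
        have h2 : (Real.exp y)⁻¹ ≤ (1 + y + y^2/2 + y^3/6 + y^4/24)⁻¹ :=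
          inv_anti₀ hppos hp
        rw [one_div] at h1
        linarith
      -- lower bound: exp (x+11) ≥ ((x+13)/2)^2
      have hlb : (x+13)^2/4 ≤ Real.exp (x + 11) := by
        have hhalf : Real.exp (x + 11) = Real.exp ((x+11)/2) * Real.exp ((x+11)/2) := by
          rw [← Real.exp_add]; ring_nf
        have h1 : (x+13)/2 ≤ Real.exp ((x+11)/2) := by
          have := Real.add_one_le_exp ((x+11)/2)
          linarith
        have h2 : (0:ℝ) ≤ (x+13)/2 := by linarith
        nlinarith
      have hE : Real.exp (-11) ≤ 1 / 58334 := by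
        rw [hneg11, ← one_div]
        have := inv_anti₀ (show (0:ℝ) < 58334 by norm_num) h11
        rw [one_div]; linarith
      have hEpos : (0:ℝ) < Real.exp (-11) := Real.exp_pos _
      have hfinal : Real.exp (-11) * 0.175 ≤ 3 / 1000000 := by linarith
      rw [abs_le]
      constructor
      · have h := mul_le_mul_of_nonneg_left hlb hEpos.le
        rw [hsplit]
        have hr : Real.exp (-11) * ((x+13)^2/4) = Real.exp (-11) * (x+13)^2 / 4 := by ring
        rw [hr] at h
        linarith
      · have h := mul_le_mul_of_nonneg_left hub hEpos.le
        rw [hsplit]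
        have hr : Real.exp (-11) * ((x+13)^2/4 + 0.175)
            = Real.exp (-11) * (x+13)^2 / 4 + Real.exp (-11) * 0.175 := by ring
        rw [hr] at h
        linarith

lemma log_sub_log_le {u v : ℝ} (hu : 1 ≤ u) (hv : 1 ≤ v) :
    Real.log u - Real.log v ≤ |u - v| := by
  have hv0 : 0 < v := by linarith
  have hu0 : 0 < u := by linarith
  have h1 : Real.log u - Real.log v ≤ u/v - 1 := by
    rw [← Real.log_div hu0.ne' hv0.ne']
    exact Real.log_le_sub_one_of_pos (by positivity)
  have h2 : u/v - 1 ≤ |u - v| := by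
    rw [div_sub_one hv0.ne', div_le_iff₀ hv0]
    nlinarith [le_abs_self (u - v), abs_nonneg (u - v)]
  linarith

/-- Truncated soft-max deviation bound: `|exp x − f x| ≤ 0.000003` for all `x`, and
consequently the truncated soft-max cross-entropy deviates from the soft-max
cross-entropy by at most `0.000003·k`. -/
theorem truncated_softmax_deviation :
    (∀ x : ℝ, |Real.exp x - truncExp x| ≤ 3 / 1000000)
    ∧ (∀ (k : ℕ) (s : Fin k → ℝ) (c : Fin k),
        |Real.log (∑ i, Real.exp (s i - s c)) - Real.log (∑ i, truncExp (s i - s c))|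
          ≤ (3 / 1000000) * k) := by
  refine ⟨pointwise_bound, fun k s c => ?_⟩
  set a : ℝ := ∑ i, Real.exp (s i - s c) with ha
  set b : ℝ := ∑ i, truncExp (s i - s c) with hb
  have ha1 : 1 ≤ a := by
    have h := Finset.single_le_sum (f := fun i => Real.exp (s i - s c))
      (fun i _ => (Real.exp_pos _).le) (Finset.mem_univ c)
    simpa using h
  have hb1 : 1 ≤ b := by
    have h := Finset.single_le_sum (f := fun i => truncExp (s i - s c))
      (fun i _ => truncExp_nonneg _) (Finset.mem_univ c)
    simp only [sub_self, truncExp_zero] at h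
    simpa using h
  have hab : |a - b| ≤ (3 / 1000000) * k := by
    rw [ha, hb, ← Finset.sum_sub_distrib]
    calc |∑ i, (Real.exp (s i - s c) - truncExp (s i - s c))|
        ≤ ∑ i, |Real.exp (s i - s c) - truncExp (s i - s c)| :=
          Finset.abs_sum_le_sum_abs _ _
      _ ≤ ∑ _i : Fin k, (3 / 1000000 : ℝ) :=
          Finset.sum_le_sum (fun i _ => pointwise_bound _)
      _ = (3 / 1000000) * k := by
          rw [Finset.sum_const, Finset.card_univ, Fintype.card_fin, nsmul_eq_mul]; ring
  rw [abs_le]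
  constructor
  · have := log_sub_log_le hb1 ha1
    rw [abs_sub_comm] at this
    linarith
  · linarith [log_sub_log_le ha1 hb1]
end
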